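/- arXiv:2311.18432 — 5 statements merged into one kernel-verified Lean document; each statement's English description precedes it below -/
import Mathlib

section
/- Let p be an odd prime, s a positive integer and s1 a positive divisor of s. Then the number of pairs (x,y) in F_{p^s} × F_{p^s} with Tr_{F_{p^s}/F_{p^{s1}}}(x^2 + y^2) = 0 equals (p^{2s} + (p^{s1} - 1)·G^2)/p^{s1}, where G^2 = (-1)^{((p-1)/2)·s} · p^s is the square of the quadratic Gauss sum of F_{p^s}. -/
/-!
Write `q = #K` and `χ` for the quadratic character of `K`. Since `#{x | x² = a} = 1 + χ a`, the
number of solutions of `x² + y² = c` is `q + ∑ z, χ z χ (c - z)`. For `c ≠ 0` the substitution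
`z = c t` turns this Jacobi sum into `J(χ, χ) = -χ(-1)`, while for `c = 0` it is `χ(-1)(q - 1)`.
The trace `K → F₁` is a surjective additive map, so its kernel has `q / #F₁` elements; summing
the counts over the kernel gives the result, with `χ(-1) = (-1)^((p-1)/2 · s)`.
-/

open Finset

theorem ringChar_ne_two_of_odd_card {F : Type*} [Field F] [Fintype F]
    (h : Odd (Fintype.card F)) : ringChar F ≠ 2 := by
  rw [Ne, FiniteField.even_card_iff_char_two, Nat.odd_iff.mp h]
  exact one_ne_zero

section QuadraticChar

variable {F : Type*} [Field F] [Fintype F] [DecidableEq F]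

theorem quadraticChar_neg_one_eq_neg_one_pow {p s : ℕ} (hp : Odd p)
    (hcard : Fintype.card F = p ^ s) :
    quadraticChar F (-1) = (-1) ^ ((p - 1) / 2 * s) := by
  have hp2 := Nat.odd_iff.mp hp
  rw [quadraticChar_neg_one (ringChar_ne_two_of_odd_card (hcard ▸ hp.pow)), hcard, Nat.cast_pow,
    map_pow, ZMod.χ₄_eq_neg_one_pow hp2, ← pow_mul]
  congr 2
  omega

theorem sum_sq_eq_sum_quadraticChar_add_one_mul (hF : ringChar F ≠ 2) (g : F → ℤ) :
    ∑ y : F, g (y ^ 2) = ∑ z : F, (quadraticChar F z + 1) * g z := by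
  rw [← sum_fiberwise univ (fun y : F => y ^ 2)]
  refine sum_congr rfl fun z _ => ?_
  rw [sum_congr rfl fun y hy => by rw [(mem_filter.mp hy).2], sum_const, nsmul_eq_mul,
    ← quadraticChar_card_sqrts hF z, Set.toFinset_ofPred]

theorem sum_quadraticChar_mul_quadraticChar_sub_of_ne_zero (hF : ringChar F ≠ 2) {c : F}
    (hc : c ≠ 0) :
    ∑ z : F, quadraticChar F z * quadraticChar F (c - z) = -quadraticChar F (-1) := by
  have hJ := jacobiSum_nontrivial_inv (quadraticChar_ne_one hF)
  rw [(quadraticChar_isQuadratic F).inv, jacobiSum] at hJ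
  rw [← hJ, ← Equiv.sum_comp (Equiv.mulLeft₀ c hc)]
  refine sum_congr rfl fun t _ => ?_
  simp only [Equiv.mulLeft₀_apply, ← mul_one_sub, map_mul]
  rw [mul_mul_mul_comm, ← sq, quadraticChar_sq_one hc, one_mul]

theorem sum_quadraticChar_mul_quadraticChar_neg :
    ∑ z : F, quadraticChar F z * quadraticChar F (-z) =
      quadraticChar F (-1) * (Fintype.card F - 1) := by
  have hsq : ∀ z : F, quadraticChar F z * quadraticChar F (-z) =
      quadraticChar F (-1) * if z = 0 then 0 else 1 := fun z => by
    split_ifs with hz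
    · simp [hz]
    · rw [neg_eq_neg_one_mul, map_mul, mul_left_comm, ← sq, quadraticChar_sq_one hz, mul_one]
  rw [sum_congr rfl fun z _ => hsq z, ← mul_sum, sum_ite, sum_const_zero, zero_add, sum_const,
    nsmul_one, filter_ne', card_erase_of_mem (mem_univ _), card_univ,
    Nat.cast_pred Fintype.card_pos]

theorem card_sq_add_sq_eq (hF : ringChar F ≠ 2) (c : F) :
    (#{xy : F × F | xy.1 ^ 2 + xy.2 ^ 2 = c} : ℤ) =
      Fintype.card F + ∑ z : F, quadraticChar F z * quadraticChar F (c - z) := by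
  have hfib : (#{xy : F × F | xy.1 ^ 2 + xy.2 ^ 2 = c} : ℤ) =
      ∑ y : F, (quadraticChar F (c - y ^ 2) + 1) := by
    rw [card_filter, Fintype.sum_prod_type_right]
    push_cast
    refine sum_congr rfl fun y _ => ?_
    rw [← quadraticChar_card_sqrts hF, Set.toFinset_ofPred, card_filter]
    push_cast
    simp only [eq_sub_iff_add_eq]
  have hshift : ∑ z : F, quadraticChar F (c - z) = 0 := by
    rw [Fintype.sum_equiv (Equiv.subLeft c) (fun z => quadraticChar F (c - z)) _ fun _ => rfl,
      quadraticChar_sum_zero hF]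
  rw [hfib, sum_sq_eq_sum_quadraticChar_add_one_mul hF (fun z => quadraticChar F (c - z) + 1)]
  simp only [mul_add, add_mul, mul_one, one_mul, sum_add_distrib, quadraticChar_sum_zero hF]
  rw [hshift, sum_const, card_univ, nsmul_one]
  ring

theorem sum_card_sq_add_sq_eq (hF : ringChar F ≠ 2) {T : Finset F} (h0 : 0 ∈ T) :
    ∑ c ∈ T, (#{xy : F × F | xy.1 ^ 2 + xy.2 ^ 2 = c} : ℤ) =
      #T * Fintype.card F + quadraticChar F (-1) * (Fintype.card F - #T) := by
  rw [sum_congr rfl fun c _ => card_sq_add_sq_eq hF c, sum_add_distrib, sum_const, nsmul_eq_mul,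
    ← add_sum_erase T _ h0]
  simp only [zero_sub]
  rw [sum_quadraticChar_mul_quadraticChar_neg,
    sum_congr rfl fun c hc => sum_quadraticChar_mul_quadraticChar_sub_of_ne_zero hF
      (ne_of_mem_erase hc),
    sum_const, nsmul_eq_mul, card_erase_of_mem h0, Nat.cast_pred (card_pos.mpr ⟨0, h0⟩)]
  ring

end QuadraticChar

theorem AddMonoidHom.card_filter_eq_zero_mul_card_of_surjective {G H : Type*} [AddGroup G]
    [AddGroup H] [Fintype G] [Fintype H] [DecidableEq H] {f : G →+ H}
    (hf : Function.Surjective f) :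
    #{g | f g = 0} * Fintype.card H = Fintype.card G := by
  have h := f.ker.card_mul_index
  rw [AddSubgroup.index_ker, f.range_eq_top.mpr hf, AddSubgroup.card_top] at h
  rw [← Nat.card_eq_fintype_card, ← Nat.card_eq_fintype_card, ← h, ← Nat.card_eq_finsetCard]
  simp [AddMonoidHom.mem_ker]

theorem card_trace_sq_add_sq_eq_zero_mul_card {F K : Type*} [Field F] [Field K] [Fintype F]
    [Fintype K] [Algebra F K] [DecidableEq F] [DecidableEq K] (hK : ringChar K ≠ 2) :
    (#{xy : K × K | Algebra.trace F K (xy.1 ^ 2 + xy.2 ^ 2) = 0} : ℤ) * Fintype.card F =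
      Fintype.card K ^ 2 + (Fintype.card F - 1) * (quadraticChar K (-1) * Fintype.card K) := by
  have : FiniteDimensional F K := Module.Finite.of_finite
  set T : Finset K := {c | Algebra.trace F K c = 0}
  have hT : (#T : ℤ) * Fintype.card F = Fintype.card K := by
    exact_mod_cast (Algebra.trace F K).toAddMonoidHom.card_filter_eq_zero_mul_card_of_surjective
      (Algebra.trace_surjective F K)
  have hfib : #{xy : K × K | Algebra.trace F K (xy.1 ^ 2 + xy.2 ^ 2) = 0} =
      ∑ c ∈ T, #{xy : K × K | xy.1 ^ 2 + xy.2 ^ 2 = c} := by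
    rw [card_eq_sum_card_fiberwise (t := T) fun xy hxy => by
      simpa only [T, coe_filter, mem_univ, true_and, Set.mem_ofPred_eq] using hxy]
    refine sum_congr rfl fun c hc => ?_
    rw [filter_filter]
    refine congrArg card (filter_congr fun xy _ => and_iff_right_of_imp fun h => ?_)
    rw [h]
    simpa [T] using hc
  rw [hfib, Nat.cast_sum, sum_card_sq_add_sq_eq hK (by simp [T])]
  linear_combination (Fintype.card K - quadraticChar K (-1)) * hT

theorem stmt0_general (p s s1 : ℕ) (hodd : Odd p)
    (F1 K : Type) [Field F1] [Field K] [Fintype F1] [Fintype K] [Algebra F1 K]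
    [DecidableEq F1]
    (hcard1 : Fintype.card F1 = p ^ s1) (hcard : Fintype.card K = p ^ s) :
    ((Finset.univ.filter
        (fun xy : K × K => Algebra.trace F1 K (xy.1 ^ 2 + xy.2 ^ 2) = 0)).card : ℤ)
      * p ^ s1
    = p ^ (2 * s) + (p ^ s1 - 1) * ((-1) ^ (((p - 1) / 2) * s) * p ^ s) := by
  classical
  have h := card_trace_sq_add_sq_eq_zero_mul_card (F := F1)
    (ringChar_ne_two_of_odd_card (hcard ▸ hodd.pow))
  rw [quadraticChar_neg_one_eq_neg_one_pow hodd hcard, hcard1, hcard] at h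
  push_cast at h
  linear_combination h

/-- Let `p` be an odd prime, `s ≥ 1` and `s1 ∣ s`. For finite fields
`F1` of cardinality `p^s1` and `K` of cardinality `p^s` with `F1 ⊆ K`, the number of
pairs `(x,y) ∈ K × K` with `Tr_{K/F1}(x² + y²) = 0` equals
`(p^(2s) + (p^s1 - 1) * G²) / p^s1`, where `G² = (-1)^(((p-1)/2)·s) * p^s` is the
square of the quadratic Gauss sum of `K`. (Stated multiplied through by `p^s1`.) -/
theorem stmt0 (p s s1 : ℕ) (hp : p.Prime) (hodd : Odd p) (hs : 0 < s) (hdvd : s1 ∣ s)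
    (hs1 : 0 < s1)
    (F1 K : Type) [Field F1] [Field K] [Fintype F1] [Fintype K] [Algebra F1 K]
    [DecidableEq K] [DecidableEq F1]
    (hcard1 : Fintype.card F1 = p ^ s1) (hcard : Fintype.card K = p ^ s) :
    ((Finset.univ.filter
        (fun xy : K × K => Algebra.trace F1 K (xy.1 ^ 2 + xy.2 ^ 2) = 0)).card : ℤ)
      * p ^ s1
    = p ^ (2 * s) + (p ^ s1 - 1) * ((-1) ^ (((p - 1) / 2) * s) * p ^ s) :=
  stmt0_general p s s1 hodd F1 K hcard1 hcard
end

section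
/- Let p be an odd prime and s1 | s2 be positive integers with s2/s1 odd. Fix μ ∈ F_{p^{s2}}^* and ρ ∈ F_{p^{s1}}. Let N(c,ρ) = #{c ∈ F_{p^{s2}}^* : Tr_{F_{p^{s2}}/F_{p^{s1}}}(μ^{-1} c^2) = ρ}. Then N(c,ρ) = p^{s2-s1} - 1 if ρ = 0, and N(c,ρ) = p^{s2-s1} + η''(μ)·η'(-ρ)·G'·G''/p^{s1} if ρ ≠ 0, where η'', η' are the quadratic characters of F_{p^{s2}}, F_{p^{s1}} and G'', G' the corresponding quadratic Gauss sums. -/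
open scoped BigOperators

attribute [local instance] ZMod.algebra

noncomputable section

/-- The canonical additive character of a finite field `F` of characteristic `p`. -/
def canonChar (p : ℕ) (F : Type) [Field F] [Fintype F] [CharP F p] (x : F) : ℂ :=
  Complex.exp (2 * Real.pi * Complex.I / p) ^ (Algebra.trace (ZMod p) F x).val

/-- The quadratic character of a finite field, extended by `η(0) = 0`. -/
def quadChar (F : Type) [Field F] [Fintype F] [DecidableEq F] (x : F) : ℂ :=
  if x = 0 then 0 else if IsSquare x then 1 else -1

/-- The quadratic Gauss sum of a finite field of characteristic `p`. -/
def quadGaussSum (p : ℕ) (F : Type) [Field F] [Fintype F] [DecidableEq F] [CharP F p] : ℂ :=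
  ∑ c : F, quadChar F c * canonChar p F c

/-! Detect the condition `Tr(μ⁻¹ c²) = ρ` with the canonical additive character `ψ'` of
`F_{p^{s1}}`. As `ψ' ∘ Tr` is the canonical character `ψ''` of `F_{p^{s2}}`, `p^{s1}` times the
number of all solutions `c` is `∑ₐ ψ'(-ρa) ∑_c ψ''(aμ⁻¹c²)`. The inner sum is `p^{s2}` for `a = 0`
and `η''(aμ⁻¹) G''` otherwise, and `η''(a) = η'(a)` because a square root of `a` generates an
extension of degree at most `2` dividing the odd degree `s2/s1`. What remains is
`∑ₐ η'(a) ψ'(-ρa) = η'(-ρ) G'`; finally, `c = 0` is a solution exactly when `ρ = 0`. -/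

open Finset Module Polynomial

section OddDegree

variable {K L : Type*} [Field K] [Field L] [Algebra K L]

theorem isSquare_algebraMap_iff_of_odd_finrank (h : Odd (finrank K L)) {a : K} :
    IsSquare (algebraMap K L a) ↔ IsSquare a := by
  refine ⟨fun ⟨r, hr⟩ => ?_, fun ha => ha.map (algebraMap K L)⟩
  have : FiniteDimensional K L := Module.finite_of_finrank_pos h.pos
  have hint : IsIntegral K r := .of_finite K r
  have hle : (minpoly K r).natDegree ≤ 2 := by
    have hdvd : minpoly K r ∣ X ^ 2 - C a :=
      minpoly.dvd K r (by simp [sq, ← hr])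
    exact (natDegree_le_of_dvd hdvd (X_pow_sub_C_ne_zero two_pos a)).trans
      (natDegree_X_pow_sub_C).le
  have hodd : Odd (minpoly K r).natDegree := h.of_dvd_nat (minpoly.degree_dvd hint)
  have hone : (minpoly K r).natDegree = 1 := by
    have := minpoly.natDegree_pos hint
    obtain ⟨k, hk⟩ := hodd
    omega
  obtain ⟨s, rfl⟩ := minpoly.natDegree_eq_one_iff.mp hone
  exact ⟨s, (algebraMap K L).injective (by rw [hr, map_mul])⟩

theorem quadraticChar_algebraMap_of_odd_finrank [Fintype K] [Fintype L] [DecidableEq K]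
    [DecidableEq L] (h : Odd (finrank K L)) (a : K) :
    quadraticChar L (algebraMap K L a) = quadraticChar K a := by
  simp only [quadraticChar_apply, quadraticCharFun, map_eq_zero_iff _ (algebraMap K L).injective,
    isSquare_algebraMap_iff_of_odd_finrank h]

end OddDegree

section CharacterSums

variable {F R : Type*} [Field F] [Fintype F] [CommRing R] [IsDomain R]

theorem gaussSum_mulShift_of_isQuadratic {χ : MulChar F R} (hχ : χ.IsQuadratic) (hχ₁ : χ ≠ 1)
    (ψ : AddChar F R) (b : F) : gaussSum χ (ψ.mulShift b) = χ b * gaussSum χ ψ := by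
  rcases eq_or_ne b 0 with rfl | hb
  · rw [AddChar.mulShift_zero, gaussSum_one_right hχ₁, MulChar.map_zero, zero_mul]
  · simpa [hχ.inv] using gaussSum_mulShift_eq χ ψ (Units.mk0 b hb)

variable [DecidableEq F]

theorem sum_addChar_mul_sq (hF : ringChar F ≠ 2) {ψ : AddChar F R} (hψ : ψ.IsPrimitive) (b : F) :
    ∑ c, ψ (b * c ^ 2) = (if b = 0 then (Fintype.card F : R) else 0) +
      (quadraticChar F).ringHomComp (Int.castRingHom R) b *
        gaussSum ((quadraticChar F).ringHomComp (Int.castRingHom R)) ψ := by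
  set η := (quadraticChar F).ringHomComp (Int.castRingHom R)
  rcases eq_or_ne b 0 with rfl | hb
  · simp [η]
  have hsqrts (x : F) : (#{c | c ^ 2 = x} : R) = η x + 1 := by
    have := congrArg (Int.cast (R := R)) (quadraticChar_card_sqrts hF x)
    push_cast at this
    simpa [η, Set.toFinset_ofPred] using this
  calc ∑ c, ψ (b * c ^ 2) = ∑ x, (#{c | c ^ 2 = x} : R) * ψ (b * x) := by
        simp_rw [← nsmul_eq_mul, ← sum_const]
        exact (sum_fiberwise' univ (· ^ 2) fun x => ψ (b * x)).symm
    _ = ∑ x, ψ (x * b) + gaussSum η (ψ.mulShift b) := by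
        simp only [hsqrts, gaussSum, AddChar.mulShift_apply, ← sum_add_distrib]
        exact sum_congr rfl fun x _ => by rw [mul_comm x b]; ring
    _ = _ := by
        have hη : η.IsQuadratic := (quadraticChar_isQuadratic F).comp _
        simpa [AddChar.sum_mulShift b hψ, hb, hη.inv] using
          gaussSum_mulShift_eq η ψ (Units.mk0 b hb)

end CharacterSums

theorem card_filter_mul_card_eq_sum {A R ι : Type*} [CommRing A] [Fintype A] [DecidableEq A]
    [CommRing R] [IsDomain R] {ψ : AddChar A R} (hψ : ψ.IsPrimitive)
    (s : Finset ι) (g : ι → A) (ρ : A) :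
    (#{x ∈ s | g x = ρ} : R) * Fintype.card A = ∑ x ∈ s, ∑ a, ψ (a * (g x - ρ)) := by
  simp_rw [AddChar.sum_mulShift _ hψ, sub_eq_zero, Nat.cast_ite, Nat.cast_zero]
  rw [sum_ite, sum_const_zero, add_zero, sum_const, nsmul_eq_mul]

theorem quadChar_eq_ringHomComp (F : Type) [Field F] [Fintype F] [DecidableEq F] (x : F) :
    quadChar F x = (quadraticChar F).ringHomComp (Int.castRingHom ℂ) x := by
  simp only [quadChar, MulChar.ringHomComp_apply, quadraticChar_apply, quadraticCharFun]
  split_ifs <;> simp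

section CanonicalCharacter

variable (p : ℕ) [NeZero p]

def canonAddChar (F : Type) [Field F] [Fintype F] [CharP F p] : AddChar F ℂ :=
  (AddChar.zmodChar p (Complex.isPrimitiveRoot_exp p (NeZero.ne p)).pow_eq_one).compAddMonoidHom
    (Algebra.trace (ZMod p) F).toAddMonoidHom

theorem canonAddChar_apply {F : Type} [Field F] [Fintype F] [CharP F p] (x : F) :
    canonAddChar p F x = canonChar p F x := rfl

theorem quadGaussSum_eq_gaussSum (F : Type) [Field F] [Fintype F] [DecidableEq F] [CharP F p] :
    quadGaussSum p F =
      gaussSum ((quadraticChar F).ringHomComp (Int.castRingHom ℂ)) (canonAddChar p F) := by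
  simp only [quadGaussSum, gaussSum, quadChar_eq_ringHomComp, canonAddChar_apply]

end CanonicalCharacter

section PrimeField

variable {p : ℕ} [Fact p.Prime]

theorem canonAddChar_isPrimitive (F : Type) [Field F] [Fintype F] [CharP F p] :
    (canonAddChar p F).IsPrimitive := by
  have hζ := AddChar.zmodChar_primitive_of_primitive_root p
    (Complex.isPrimitiveRoot_exp p (NeZero.ne p))
  refine AddChar.IsPrimitive.of_ne_one fun h => ?_
  obtain ⟨b, hb⟩ := Algebra.trace_surjective (ZMod p) F 1
  have h1 : canonAddChar p F b = 1 := by rw [h, AddChar.one_apply]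
  exact one_ne_zero ((hζ.zmod_char_eq_one_iff p _).mp (hb ▸ h1))

theorem canonAddChar_trace (F1 F2 : Type) [Field F1] [Field F2] [Fintype F1] [Fintype F2]
    [CharP F1 p] [CharP F2 p] [Algebra F1 F2] (y : F2) :
    canonAddChar p F1 (Algebra.trace F1 F2 y) = canonAddChar p F2 y := by
  have : IsScalarTower (ZMod p) F1 F2 := .of_algebraMap_eq' (Subsingleton.elim _ _)
  simp only [canonAddChar_apply, canonChar, Algebra.trace_trace]

theorem canonAddChar_mul_trace (F1 F2 : Type) [Field F1] [Field F2] [Fintype F1] [Fintype F2]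
    [CharP F1 p] [CharP F2 p] [Algebra F1 F2] (a : F1) (y : F2) :
    canonAddChar p F1 (a * Algebra.trace F1 F2 y) =
      canonAddChar p F2 (algebraMap F1 F2 a * y) := by
  rw [← canonAddChar_trace F1 F2, ← smul_eq_mul, ← map_smul, Algebra.smul_def]

theorem card_filter_trace_inv_mul_sq_mul_card (hp : p ≠ 2)
    {F1 F2 : Type} [Field F1] [Field F2] [Fintype F1] [Fintype F2] [DecidableEq F1]
    [DecidableEq F2] [CharP F1 p] [CharP F2 p] [Algebra F1 F2] (hodd : Odd (finrank F1 F2))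
    {μ : F2} (hμ : μ ≠ 0) (ρ : F1) :
    (#{c : F2 | Algebra.trace F1 F2 (μ⁻¹ * c ^ 2) = ρ} : ℂ) * Fintype.card F1 = Fintype.card F2 +
      quadChar F2 μ * quadChar F1 (-ρ) * quadGaussSum p F1 * quadGaussSum p F2 := by
  set η₁ := (quadraticChar F1).ringHomComp (Int.castRingHom ℂ)
  set η₂ := (quadraticChar F2).ringHomComp (Int.castRingHom ℂ)
  set ψ₁ := canonAddChar p F1
  set ψ₂ := canonAddChar p F2
  have hη₂ : η₂.IsQuadratic := (quadraticChar_isQuadratic F2).comp _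
  have hF2 : ringChar F2 ≠ 2 := by rwa [ringChar.eq F2 p]
  have hη (a : F1) : η₂ (algebraMap F1 F2 a * μ⁻¹) = η₁ a * η₂ μ := by
    rw [map_mul, ← MulChar.inv_apply', hη₂.inv]
    simp [η₁, η₂, quadraticChar_algebraMap_of_odd_finrank hodd]
  rw [card_filter_mul_card_eq_sum (canonAddChar_isPrimitive F1)]
  calc ∑ c, ∑ a, ψ₁ (a * (Algebra.trace F1 F2 (μ⁻¹ * c ^ 2) - ρ))
      = ∑ a, ψ₁ (-ρ * a) * ∑ c, ψ₂ ((algebraMap F1 F2 a * μ⁻¹) * c ^ 2) := by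
        rw [sum_comm]
        refine sum_congr rfl fun a _ => ?_
        rw [mul_sum]
        refine sum_congr rfl fun c _ => ?_
        rw [show a * (Algebra.trace F1 F2 (μ⁻¹ * c ^ 2) - ρ) =
          -ρ * a + a * Algebra.trace F1 F2 (μ⁻¹ * c ^ 2) by ring, AddChar.map_add_eq_mul,
          canonAddChar_mul_trace, mul_assoc]
    _ = ∑ a, ψ₁ (-ρ * a) * ((if a = 0 then (Fintype.card F2 : ℂ) else 0) + η₁ a * η₂ μ *
          gaussSum η₂ ψ₂) := by
        refine sum_congr rfl fun a _ => ?_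
        rw [sum_addChar_mul_sq hF2 (canonAddChar_isPrimitive F2), hη]
        simp [hμ, η₂, ψ₂]
    _ = Fintype.card F2 + η₂ μ * gaussSum η₂ ψ₂ * gaussSum η₁ (ψ₁.mulShift (-ρ)) := by
        simp only [mul_add, sum_add_distrib, mul_ite, mul_zero, sum_ite_eq', mem_univ, if_true,
          AddChar.map_zero_eq_one, one_mul]
        rw [show gaussSum η₁ (ψ₁.mulShift (-ρ)) = ∑ a, η₁ a * ψ₁ (-ρ * a) from rfl, mul_sum]
        exact congrArg _ (sum_congr rfl fun a _ => by ring)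
    _ = _ := by
        rw [gaussSum_mulShift_of_isQuadratic ((quadraticChar_isQuadratic F1).comp _)
          ((MulChar.ringHomComp_ne_one_iff Int.cast_injective).mpr (quadraticChar_ne_one ?_)),
          quadChar_eq_ringHomComp, quadChar_eq_ringHomComp, quadGaussSum_eq_gaussSum,
          quadGaussSum_eq_gaussSum]
        · ring
        · rwa [ringChar.eq F1 p]

end PrimeField

theorem stmt4_general (p s1 s2 : ℕ) (hp : p.Prime) (hodd : Odd p) (hs1 : 0 < s1)
    (hquot : Odd (s2 / s1))
    (F1 F2 : Type) [Field F1] [Field F2] [Fintype F1] [Fintype F2]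
    [DecidableEq F1] [DecidableEq F2] [CharP F1 p] [CharP F2 p] [Algebra F1 F2]
    (hcard1 : Fintype.card F1 = p ^ s1) (hcard2 : Fintype.card F2 = p ^ s2)
    (μ : F2) (hμ : μ ≠ 0) (ρ : F1) :
    (ρ = 0 →
      ((Finset.univ.filter (fun c : F2 => c ≠ 0 ∧ Algebra.trace F1 F2 (μ⁻¹ * c ^ 2) = ρ)).card : ℂ)
        = p ^ (s2 - s1) - 1) ∧
    (ρ ≠ 0 →
      ((Finset.univ.filter (fun c : F2 => c ≠ 0 ∧ Algebra.trace F1 F2 (μ⁻¹ * c ^ 2) = ρ)).card : ℂ)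
        = p ^ (s2 - s1) +
          quadChar F2 μ * quadChar F1 (-ρ) * quadGaussSum p F1 * quadGaussSum p F2 / p ^ s1) := by
  have : Fact p.Prime := ⟨hp⟩
  have hs2 : s2 = s1 * finrank F1 F2 := Nat.pow_right_injective hp.two_le <| by
    show p ^ s2 = p ^ (s1 * _)
    rw [← hcard2, card_eq_pow_finrank (K := F1), hcard1, pow_mul]
  have hrank : Odd (finrank F1 F2) := by rwa [hs2, Nat.mul_div_cancel_left _ hs1] at hquot
  have hpow : (p : ℂ) ^ (s2 - s1) = p ^ s2 / p ^ s1 :=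
    pow_sub₀ _ (by exact_mod_cast hp.ne_zero) (hs2 ▸ Nat.le_mul_of_pos_right s1 hrank.pos)
  have hM := card_filter_trace_inv_mul_sq_mul_card (hodd.ne_two_of_dvd_nat dvd_rfl) hrank hμ ρ
  rw [hcard1, hcard2] at hM
  push_cast at hM
  have hM' : (#{c | Algebra.trace F1 F2 (μ⁻¹ * c ^ 2) = ρ} : ℂ) = p ^ (s2 - s1) +
      quadChar F2 μ * quadChar F1 (-ρ) * quadGaussSum p F1 * quadGaussSum p F2 / p ^ s1 := by
    rw [hpow, ← add_div, eq_div_iff (pow_ne_zero _ (by exact_mod_cast hp.ne_zero)), hM]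
  have hN : ({c | c ≠ 0 ∧ Algebra.trace F1 F2 (μ⁻¹ * c ^ 2) = ρ} : Finset F2) =
      ({c | Algebra.trace F1 F2 (μ⁻¹ * c ^ 2) = ρ} : Finset F2).erase 0 := by
    ext c; simp
  rw [hN]
  constructor
  · rintro rfl
    rw [cast_card_erase_of_mem (by simp), hM']
    simp [quadChar]
  · intro hρ
    rwa [erase_eq_of_notMem (by simpa [eq_comm] using hρ)]

/-- with `s1 ∣ s2`, `s2/s1` odd, `μ ∈ F_{p^{s2}}^*`, `ρ ∈ F_{p^{s1}}`,
the number of `c ∈ F_{p^{s2}}^*` with `Tr_{F_{p^{s2}}/F_{p^{s1}}}(μ⁻¹ c²) = ρ` equals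
`p^{s2-s1} - 1` if `ρ = 0` and `p^{s2-s1} + η''(μ)η'(-ρ)G'G''/p^{s1}` if `ρ ≠ 0`. -/
theorem stmt4 (p s1 s2 : ℕ) (hp : p.Prime) (hodd : Odd p) (hs1 : 0 < s1)
    (hdvd : s1 ∣ s2) (hquot : Odd (s2 / s1))
    (F1 F2 : Type) [Field F1] [Field F2] [Fintype F1] [Fintype F2]
    [DecidableEq F1] [DecidableEq F2] [CharP F1 p] [CharP F2 p] [Algebra F1 F2]
    (hcard1 : Fintype.card F1 = p ^ s1) (hcard2 : Fintype.card F2 = p ^ s2)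
    (μ : F2) (hμ : μ ≠ 0) (ρ : F1) :
    (ρ = 0 →
      ((Finset.univ.filter (fun c : F2 => c ≠ 0 ∧ Algebra.trace F1 F2 (μ⁻¹ * c ^ 2) = ρ)).card : ℂ)
        = p ^ (s2 - s1) - 1) ∧
    (ρ ≠ 0 →
      ((Finset.univ.filter (fun c : F2 => c ≠ 0 ∧ Algebra.trace F1 F2 (μ⁻¹ * c ^ 2) = ρ)).card : ℂ)
        = p ^ (s2 - s1) +
          quadChar F2 μ * quadChar F1 (-ρ) * quadGaussSum p F1 * quadGaussSum p F2 / p ^ s1) :=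
  stmt4_general p s1 s2 hp hodd hs1 hquot F1 F2 hcard1 hcard2 μ hμ ρ
end
end

section
/- Let p be an odd prime, s a positive integer, and s1, s2 divisors of s with s2 | s1. In the code C_D defined over F_{p^{s2}} by codewords (Tr_{F_{p^s}/F_{p^{s2}}}(ax+by) + c)_{(x,y)∈D} with D = {(x,y) : Tr_{F_{p^s}/F_{p^{s1}}}(x^2+y^2)=0}, the codeword with a = b = 0 and c ≠ 0 has Hamming weight equal to the full length n = (p^{2s}+(p^{s1}-1)G^2)/p^{s1}, and for (a,b) ≠ (0,0) with Tr_{F_{p^s}/F_{p^{s1}}}(a^2+b^2) = 0 and c = 0 the codeword has weight p^{2s-s1-s2}(p^{s2}-1). -/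
/-!
Let `ψ` be the canonical additive character `x ↦ exp (2πi Tr_{K/𝔽_p}(x) / p)` of `K`.
Since `ψ` factors through `Tr_{K/F}` for every subfield `F`, orthogonality gives
`∑_{α ∈ F} ψ(α w) = |F| · [Tr_{K/F} w = 0]`. Hence `|F1| |F2|` times the number of
`(x, y) ∈ D` with `Tr_{K/F2}(a x + b y) = 0` equals `∑_{α ∈ F1, β ∈ F2} S(α, β a) S(α, β b)`,
where `S(t, u) = ∑_x ψ(t x² + u x)`. For `α ≠ 0`, completing the square gives
`S(α, u) S(α, v) = ψ(-(u² + v²) / 4α) G²`, where the quadratic Gauss sum satisfies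
`G² = η(-1) p^s` for the quadratic character `η`; the factor `ψ(…)` is `1` because
`F2 ⊆ F1` and `Tr_{K/F1}(a² + b²) = 0`. For `α = 0` the product vanishes unless
`β a = β b = 0`, and then it is `p^{2s}`. The case `a = b = 0` counts `D` itself, and the
weight is `|D|` minus the count for `(a, b)`.
-/

open Finset AddChar

theorem ZMod.χ₄_nat_pow_of_odd {p : ℕ} (hp : Odd p) (s : ℕ) :
    ZMod.χ₄ (p ^ s : ℕ) = (-1) ^ ((p - 1) / 2 * s) := by
  rw [Nat.cast_pow, map_pow, ZMod.χ₄_eq_neg_one_pow (Nat.odd_iff.mp hp), pow_mul]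
  congr 2
  have := Nat.odd_iff.mp hp
  omega

theorem ringChar_ne_two_of_card_eq_pow {K : Type*} [Field K] [Fintype K] {p s : ℕ}
    (hp : p.Prime) (hodd : Odd p) (hcard : Fintype.card K = p ^ s) : ringChar K ≠ 2 := by
  have : Fact p.Prime := ⟨hp⟩
  have : CharP K p := charP_of_card_eq_prime_pow hcard
  rw [ringChar.eq K p]
  rintro rfl
  exact Nat.not_odd_iff_even.mpr even_two hodd

theorem quadraticChar_neg_one_of_card_eq_pow {K : Type*} [Field K] [Fintype K] [DecidableEq K]
    {p s : ℕ} (hp : p.Prime) (hodd : Odd p) (hcard : Fintype.card K = p ^ s) :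
    quadraticChar K (-1) = (-1) ^ ((p - 1) / 2 * s) := by
  rw [quadraticChar_neg_one (ringChar_ne_two_of_card_eq_pow hp hodd hcard), hcard,
    ZMod.χ₄_nat_pow_of_odd hodd]

open Polynomial in
theorem mem_range_algebraMap_of_pow_card_eq_self {F K : Type*} [Field F] [Fintype F] [Field K]
    [Algebra F K] {z : K} (hz : z ^ Fintype.card F = z) : z ∈ (algebraMap F K).range := by
  have hsplit : Splits (X ^ Fintype.card F - X : F[X]) := by
    simpa using (FiniteField.isSplittingField_sub F F).splits
  refine hsplit.mem_range_of_isRoot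
    (FiniteField.X_pow_card_sub_X_ne_zero F Fintype.one_lt_card) ?_
  simp [hz]

theorem range_algebraMap_le_of_card_eq_pow {F F' K : Type*} [Field F] [Fintype F] [Field F']
    [Fintype F'] [Field K] [Algebra F K] [Algebra F' K] {n : ℕ}
    (h : Fintype.card F = Fintype.card F' ^ n) :
    (algebraMap F' K).range ≤ (algebraMap F K).range := by
  rintro _ ⟨β, rfl⟩
  exact mem_range_algebraMap_of_pow_card_eq_self (by rw [h, ← map_pow, FiniteField.pow_card_pow])

theorem Algebra.trace_algebraMap_mul {F K : Type*} [Field F] [Field K] [Algebra F K]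
    (c : F) (w : K) : Algebra.trace F K (algebraMap F K c * w) = c * Algebra.trace F K w := by
  rw [← Algebra.smul_def, map_smul, smul_eq_mul]

noncomputable def canonicalAddChar (p : ℕ) [Fact p.Prime] (K : Type*) [Field K] [Fintype K]
    [CharP K p] : AddChar K ℂ :=
  letI := ZMod.algebra K p
  ZMod.stdAddChar.compAddMonoidHom (Algebra.trace (ZMod p) K).toAddMonoidHom

section CanonicalAddChar

variable (p : ℕ) [Fact p.Prime] {K : Type*} [Field K] [Fintype K] [CharP K p]

theorem canonicalAddChar_ne_one : canonicalAddChar p K ≠ 1 := by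
  let := ZMod.algebra K p
  obtain ⟨x, hx⟩ := Algebra.trace_surjective (ZMod p) K 1
  refine ne_one_iff.mpr ⟨x, fun h => one_ne_zero (ZMod.injective_stdAddChar (N := p) ?_)⟩
  rwa [map_zero_eq_one, ← hx]

-- Any two `ZMod p`-algebra structures agree, so every finite field of characteristic `p`
-- lies in a tower over `ZMod p`.
theorem canonicalAddChar_eq_comp_trace {F : Type*} [Field F] [Fintype F] [CharP F p]
    [Algebra F K] (w : K) :
    canonicalAddChar p K w = canonicalAddChar p F (Algebra.trace F K w) := by
  let := ZMod.algebra K p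
  let := ZMod.algebra F p
  have : IsScalarTower (ZMod p) F K := .of_algebraMap_eq' (Subsingleton.elim _ _)
  change ZMod.stdAddChar (Algebra.trace (ZMod p) K w) =
    ZMod.stdAddChar (Algebra.trace (ZMod p) F (Algebra.trace F K w))
  rw [Algebra.trace_trace]

theorem sum_canonicalAddChar_algebraMap_mul {F : Type*} [Field F] [Fintype F] [DecidableEq F]
    [Algebra F K] (w : K) :
    ∑ α : F, canonicalAddChar p K (algebraMap F K α * w) =
      if Algebra.trace F K w = 0 then (Fintype.card F : ℂ) else 0 := by
  have : CharP F p := (Algebra.charP_iff F K p).mpr ‹_›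
  have hmul (α : F) : canonicalAddChar p K (algebraMap F K α * w) =
      canonicalAddChar p F (α * Algebra.trace F K w) := by
    rw [canonicalAddChar_eq_comp_trace p (F := F), Algebra.trace_algebraMap_mul]
  simp_rw [hmul]
  rw [sum_mulShift _ (IsPrimitive.of_ne_one (canonicalAddChar_ne_one p)), Nat.cast_ite,
    Nat.cast_zero]

theorem canonicalAddChar_algebraMap_mul_of_trace_eq_zero {F : Type*} [Field F] [Fintype F]
    [Algebra F K] {w : K} (hw : Algebra.trace F K w = 0) (c : F) :
    canonicalAddChar p K (algebraMap F K c * w) = 1 := by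
  have : CharP F p := (Algebra.charP_iff F K p).mpr ‹_›
  rw [canonicalAddChar_eq_comp_trace p (F := F), Algebra.trace_algebraMap_mul, hw, mul_zero,
    map_zero_eq_one]

end CanonicalAddChar

section QuadraticSums

variable {K : Type*} [Field K] [Fintype K] {ψ : AddChar K ℂ}

theorem sum_addChar_sq [DecidableEq K] (hK : ringChar K ≠ 2) (hψ : ψ ≠ 1) :
    ∑ x, ψ (x ^ 2) = gaussSum ((quadraticChar K).ringHomComp (Int.castRingHom ℂ)) ψ := by
  have hfiber (a : K) :
      ∑ x with x ^ 2 = a, ψ (x ^ 2) = (quadraticChar K a + 1 : ℂ) * ψ a := by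
    rw [sum_congr rfl fun x hx => by rw [(mem_filter.mp hx).2], sum_const, nsmul_eq_mul]
    congr 1
    exact_mod_cast Set.toFinset_ofPred (p := fun x : K => x ^ 2 = a) ▸
      quadraticChar_card_sqrts hK a
  rw [← sum_fiberwise univ (· ^ 2), sum_congr rfl fun a _ => hfiber a]
  simp [add_mul, sum_add_distrib, sum_eq_zero_of_ne_one hψ, gaussSum]

theorem sq_sum_addChar_mul_sq [DecidableEq K] (hK : ringChar K ≠ 2) (hψ : ψ ≠ 1) {t : K}
    (ht : t ≠ 0) : (∑ x, ψ (t * x ^ 2)) ^ 2 = quadraticChar K (-1) * Fintype.card K := by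
  have hψt : ψ.mulShift t ≠ 1 := IsPrimitive.of_ne_one hψ ht
  rw [show ∑ x, ψ (t * x ^ 2) = ∑ x, ψ.mulShift t (x ^ 2) from rfl, sum_addChar_sq hK hψt,
    gaussSum_sq ((MulChar.ringHomComp_ne_one_iff Int.cast_injective).mpr
      (quadraticChar_ne_one hK)) ((quadraticChar_isQuadratic K).comp _)
      (IsPrimitive.of_ne_one hψt)]
  rfl

theorem sum_addChar_quadratic (hK : ringChar K ≠ 2) {t : K} (ht : t ≠ 0) (u : K) :
    ∑ x, ψ (t * x ^ 2 + u * x) = ψ (-u ^ 2 / (4 * t)) * ∑ x, ψ (t * x ^ 2) := by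
  have h2 : (2 : K) ≠ 0 := Ring.two_ne_zero hK
  have h4 : (4 : K) ≠ 0 := by
    rw [show (4 : K) = 2 * 2 by norm_num]
    exact mul_ne_zero h2 h2
  have hsq (x : K) : t * x ^ 2 + u * x = -u ^ 2 / (4 * t) + t * (x + u / (2 * t)) ^ 2 := by
    field_simp
    ring
  simp_rw [hsq, map_add_eq_mul, ← mul_sum]
  congr 1
  exact Fintype.sum_equiv (Equiv.addRight (u / (2 * t))) _ _ fun x => rfl

theorem sum_addChar_quadratic_mul_sum [DecidableEq K] (hK : ringChar K ≠ 2) (hψ : ψ ≠ 1)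
    {t : K} (ht : t ≠ 0) (u v : K) :
    (∑ x, ψ (t * x ^ 2 + u * x)) * ∑ x, ψ (t * x ^ 2 + v * x) =
      ψ (-(u ^ 2 + v ^ 2) / (4 * t)) * (quadraticChar K (-1) * Fintype.card K) := by
  rw [sum_addChar_quadratic hK ht, sum_addChar_quadratic hK ht, mul_mul_mul_comm,
    ← map_add_eq_mul, ← sq, sq_sum_addChar_mul_sq hK hψ ht, neg_add, add_div]

end QuadraticSums

noncomputable def traceQuadric (F K : Type*) [Field F] [Field K] [Fintype K] [DecidableEq F]
    [Algebra F K] : Finset (K × K) :=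
  {xy | Algebra.trace F K (xy.1 ^ 2 + xy.2 ^ 2) = 0}

section TraceQuadric

variable {F1 F2 K : Type*} [Field F1] [Field F2] [Field K] [Fintype F1] [Fintype F2]
  [Fintype K] [DecidableEq F1] [DecidableEq F2] [Algebra F1 K] [Algebra F2 K]

section CharacterSums

variable (p : ℕ) [Fact p.Prime] [CharP K p]

theorem card_filter_traceQuadric_mul_eq_sum (a b : K) :
    (#{xy ∈ traceQuadric F1 K | Algebra.trace F2 K (a * xy.1 + b * xy.2) = 0} : ℂ) *
        Fintype.card F1 * Fintype.card F2 =
      ∑ α : F1, ∑ β : F2,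
        (∑ x, canonicalAddChar p K (algebraMap F1 K α * x ^ 2 + algebraMap F2 K β * a * x)) *
          ∑ y, canonicalAddChar p K (algebraMap F1 K α * y ^ 2 + algebraMap F2 K β * b * y) := by
  set ψ := canonicalAddChar p K
  have hind (xy : K × K) :
      (if Algebra.trace F1 K (xy.1 ^ 2 + xy.2 ^ 2) = 0 ∧
          Algebra.trace F2 K (a * xy.1 + b * xy.2) = 0 then (1 : ℂ) else 0) *
          Fintype.card F1 * Fintype.card F2 =
        (∑ α : F1, ψ (algebraMap F1 K α * (xy.1 ^ 2 + xy.2 ^ 2))) *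
          ∑ β : F2, ψ (algebraMap F2 K β * (a * xy.1 + b * xy.2)) := by
    rw [sum_canonicalAddChar_algebraMap_mul, sum_canonicalAddChar_algebraMap_mul]
    split_ifs <;> simp_all
  calc _ = ∑ xy : K × K, ∑ α : F1, ∑ β : F2,
          ψ (algebraMap F1 K α * (xy.1 ^ 2 + xy.2 ^ 2)) *
            ψ (algebraMap F2 K β * (a * xy.1 + b * xy.2)) := by
        simp only [traceQuadric, filter_filter, natCast_card_filter, sum_mul]
        simp only [hind, sum_mul_sum]
    _ = ∑ α : F1, ∑ β : F2, ∑ xy : K × K,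
          ψ (algebraMap F1 K α * xy.1 ^ 2 + algebraMap F2 K β * a * xy.1) *
            ψ (algebraMap F1 K α * xy.2 ^ 2 + algebraMap F2 K β * b * xy.2) := by
        rw [sum_comm]
        refine sum_congr rfl fun α _ => ?_
        rw [sum_comm]
        refine sum_congr rfl fun β _ => sum_congr rfl fun xy _ => ?_
        rw [← map_add_eq_mul, ← map_add_eq_mul]
        ring_nf
    _ = _ := by simp_rw [sum_mul_sum, Fintype.sum_prod_type]

theorem sum_canonicalAddChar_quadratic_mul_sum [DecidableEq K] (hK : ringChar K ≠ 2) {u v : K}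
    (huv : Algebra.trace F1 K (u ^ 2 + v ^ 2) = 0) :
    ∑ α : F1, (∑ x, canonicalAddChar p K (algebraMap F1 K α * x ^ 2 + u * x)) *
        ∑ y, canonicalAddChar p K (algebraMap F1 K α * y ^ 2 + v * y) =
      (if u = 0 ∧ v = 0 then (Fintype.card K : ℂ) ^ 2 else 0) +
        (Fintype.card F1 - 1) * (quadraticChar K (-1) * Fintype.card K) := by
  set ψ := canonicalAddChar p K
  have hψ : ψ ≠ 1 := canonicalAddChar_ne_one p
  have hlinear (w : K) : ∑ x, ψ (algebraMap F1 K 0 * x ^ 2 + w * x) =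
      if w = 0 then (Fintype.card K : ℂ) else 0 := by
    simp only [map_zero, zero_mul, zero_add, mul_comm w]
    rw [sum_mulShift _ (IsPrimitive.of_ne_one hψ), Nat.cast_ite, Nat.cast_zero]
  have hquadratic {α : F1} (hα : α ≠ 0) :
      (∑ x, ψ (algebraMap F1 K α * x ^ 2 + u * x)) *
          ∑ y, ψ (algebraMap F1 K α * y ^ 2 + v * y) =
        quadraticChar K (-1) * Fintype.card K := by
    have hα' : algebraMap F1 K α ≠ 0 := (map_ne_zero _).mpr hα
    have hshift : -(u ^ 2 + v ^ 2) / (4 * algebraMap F1 K α) =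
        algebraMap F1 K (-(4 * α)⁻¹) * (u ^ 2 + v ^ 2) := by
      simp [map_ofNat]
      ring
    rw [sum_addChar_quadratic_mul_sum hK hψ hα', hshift,
      canonicalAddChar_algebraMap_mul_of_trace_eq_zero p huv, one_mul]
  rw [← add_sum_erase _ _ (mem_univ 0), hlinear, hlinear,
    sum_congr rfl fun α hα => hquadratic (ne_of_mem_erase hα), sum_const,
    card_erase_of_mem (mem_univ _), card_univ, nsmul_eq_mul,
    Nat.cast_sub Fintype.card_pos, Nat.cast_one]
  congr 1
  split_ifs <;> simp_all [sq]

end CharacterSums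

theorem card_filter_traceQuadric_mul_eq [DecidableEq K] (hK : ringChar K ≠ 2)
    (hF : (algebraMap F2 K).range ≤ (algebraMap F1 K).range) {a b : K}
    (hab : Algebra.trace F1 K (a ^ 2 + b ^ 2) = 0) :
    (#{xy ∈ traceQuadric F1 K | Algebra.trace F2 K (a * xy.1 + b * xy.2) = 0} : ℂ) *
        Fintype.card F1 * Fintype.card F2 =
      (if a = 0 ∧ b = 0 then (Fintype.card F2 : ℂ) else 1) * Fintype.card K ^ 2 +
        Fintype.card F2 * (Fintype.card F1 - 1) * (quadraticChar K (-1) * Fintype.card K) := by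
  have : Fact (ringChar K).Prime := ⟨CharP.char_is_prime K _⟩
  have htr (β : F2) :
      Algebra.trace F1 K ((algebraMap F2 K β * a) ^ 2 + (algebraMap F2 K β * b) ^ 2) = 0 := by
    obtain ⟨γ, hγ⟩ := hF ⟨β, rfl⟩
    rw [← hγ, mul_pow, mul_pow, ← mul_add, ← map_pow, Algebra.trace_algebraMap_mul, hab,
      mul_zero]
  have hzero (β : F2) : (algebraMap F2 K β * a = 0 ∧ algebraMap F2 K β * b = 0) ↔
      β = 0 ∨ (a = 0 ∧ b = 0) := by
    simp only [mul_eq_zero, map_eq_zero]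
    tauto
  rw [card_filter_traceQuadric_mul_eq_sum (ringChar K), sum_comm,
    sum_congr rfl fun β _ => sum_canonicalAddChar_quadratic_mul_sum _ hK (htr β),
    sum_add_distrib, sum_const, card_univ, nsmul_eq_mul]
  simp only [hzero]
  split_ifs with h <;> simp [h, mul_assoc]

theorem card_traceQuadric_mul [DecidableEq K] (hK : ringChar K ≠ 2) :
    (#(traceQuadric F1 K) : ℤ) * Fintype.card F1 =
      Fintype.card K ^ 2 + (Fintype.card F1 - 1) * (quadraticChar K (-1) * Fintype.card K) := by
  have h := card_filter_traceQuadric_mul_eq (F2 := F1) hK le_rfl (a := 0) (b := 0) (by simp)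
  simp only [zero_mul, add_zero, map_zero, filter_true, and_self, if_true] at h
  have hq : (Fintype.card F1 : ℂ) ≠ 0 := Nat.cast_ne_zero.mpr Fintype.card_ne_zero
  have h' : (#(traceQuadric F1 K) * Fintype.card F1 : ℂ) * Fintype.card F1 =
      (Fintype.card K ^ 2 + (Fintype.card F1 - 1) * (quadraticChar K (-1) * Fintype.card K)) *
        Fintype.card F1 := by
    linear_combination h
  exact_mod_cast mul_right_cancel₀ hq h'

theorem card_filter_traceQuadric_ne_zero_mul [DecidableEq K] (hK : ringChar K ≠ 2)
    (hF : (algebraMap F2 K).range ≤ (algebraMap F1 K).range) {a b : K}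
    (hab₀ : ¬(a = 0 ∧ b = 0)) (hab : Algebra.trace F1 K (a ^ 2 + b ^ 2) = 0) :
    #{xy ∈ traceQuadric F1 K | Algebra.trace F2 K (a * xy.1 + b * xy.2) ≠ 0} *
        Fintype.card F1 * Fintype.card F2 =
      Fintype.card K ^ 2 * (Fintype.card F2 - 1) := by
  have hD : (#(traceQuadric F1 K) : ℂ) * Fintype.card F1 =
      Fintype.card K ^ 2 + (Fintype.card F1 - 1) * (quadraticChar K (-1) * Fintype.card K) := by
    exact_mod_cast card_traceQuadric_mul hK
  have hM := card_filter_traceQuadric_mul_eq hK hF hab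
  rw [if_neg hab₀, one_mul] at hM
  have hsplit :
      (#{xy ∈ traceQuadric F1 K | Algebra.trace F2 K (a * xy.1 + b * xy.2) = 0} : ℂ) +
        #{xy ∈ traceQuadric F1 K | Algebra.trace F2 K (a * xy.1 + b * xy.2) ≠ 0} =
          #(traceQuadric F1 K) := by
    exact_mod_cast card_filter_add_card_filter_not _
  apply Nat.cast_injective (R := ℂ)
  push_cast [Nat.cast_sub Fintype.card_pos]
  linear_combination (Fintype.card F1 * Fintype.card F2 : ℂ) * hsplit + Fintype.card F2 * hD - hM

end TraceQuadric

theorem stmt9_general (p s s1 s2 : ℕ) (hp : p.Prime) (hodd : Odd p) (hs : 0 < s)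
    (hdvd1 : s1 ∣ s) (hdvd2 : s2 ∣ s1)
    (F1 F2 K : Type) [Field F1] [Field F2] [Field K]
    [Fintype F1] [Fintype F2] [Fintype K]
    [DecidableEq F1] [DecidableEq F2] [DecidableEq K]
    [Algebra F1 K] [Algebra F2 K]
    (hcard1 : Fintype.card F1 = p ^ s1) (hcard2 : Fintype.card F2 = p ^ s2)
    (hcard : Fintype.card K = p ^ s) :
    let D : Finset (K × K) := Finset.univ.filter
      (fun xy : K × K => Algebra.trace F1 K (xy.1 ^ 2 + xy.2 ^ 2) = 0)
    let wt : K → K → F2 → ℕ := fun a b c =>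
      (D.filter (fun xy => Algebra.trace F2 K (a * xy.1 + b * xy.2) + c ≠ 0)).card
    (∀ c : F2, c ≠ 0 → wt 0 0 c = D.card) ∧
    ((D.card : ℤ) * p ^ s1
        = p ^ (2 * s) + (p ^ s1 - 1) * ((-1) ^ (((p - 1) / 2) * s) * p ^ s)) ∧
    (∀ a b : K, ¬(a = 0 ∧ b = 0) → Algebra.trace F1 K (a ^ 2 + b ^ 2) = 0 →
      wt a b 0 = p ^ (2 * s - s1 - s2) * (p ^ s2 - 1)) := by
  intro D wt
  have hK : ringChar K ≠ 2 := ringChar_ne_two_of_card_eq_pow hp hodd hcard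
  have hF : (algebraMap F2 K).range ≤ (algebraMap F1 K).range :=
    range_algebraMap_le_of_card_eq_pow (n := s1 / s2)
      (by rw [hcard1, hcard2, ← pow_mul, Nat.mul_div_cancel' hdvd2])
  refine ⟨fun c hc => ?_, ?_, fun a b hab₀ hab => ?_⟩
  · exact congrArg card (filter_true_of_mem fun xy _ => by simpa using hc)
  · have hD : (#D : ℤ) * Fintype.card F1 = Fintype.card K ^ 2 +
        (Fintype.card F1 - 1) * (quadraticChar K (-1) * Fintype.card K) :=
      card_traceQuadric_mul hK
    rw [hcard1, hcard, quadraticChar_neg_one_of_card_eq_pow hp hodd hcard] at hD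
    push_cast at hD
    linear_combination hD
  · have hwt : #{xy ∈ D | Algebra.trace F2 K (a * xy.1 + b * xy.2) ≠ 0} * (p ^ s1 * p ^ s2) =
        (p ^ s) ^ 2 * (p ^ s2 - 1) := by
      rw [← mul_assoc, ← hcard1, ← hcard2, ← hcard]
      exact card_filter_traceQuadric_ne_zero_mul hK hF hab₀ hab
    have hs1_le : s1 ≤ s := Nat.le_of_dvd hs hdvd1
    have hs2_le : s2 ≤ s1 := Nat.le_of_dvd (Nat.pos_of_dvd_of_pos hdvd1 hs) hdvd2
    have hexp : (p ^ s) ^ 2 = p ^ (2 * s - s1 - s2) * (p ^ s1 * p ^ s2) := by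
      rw [← pow_mul, ← pow_add, ← pow_add]
      congr 1
      omega
    refine Nat.eq_of_mul_eq_mul_right (Nat.mul_pos (pow_pos hp.pos s1) (pow_pos hp.pos s2)) ?_
    simp only [wt, add_zero, hwt, hexp]
    ring

/-- in the code `C_D` (with `s2 ∣ s1 ∣ s`), the codeword with `a = b = 0`
and `c ≠ 0` has Hamming weight equal to the full length
`n = (p^{2s}+(p^{s1}-1)G²)/p^{s1}`, and for `(a,b) ≠ (0,0)` with
`Tr_{K/F1}(a²+b²) = 0` and `c = 0` the codeword has weight `p^{2s-s1-s2}(p^{s2}-1)`. -/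
theorem stmt9 (p s s1 s2 : ℕ) (hp : p.Prime) (hodd : Odd p) (hs : 0 < s)
    (hs2 : 0 < s2) (hdvd1 : s1 ∣ s) (hdvd2 : s2 ∣ s1)
    (F1 F2 K : Type) [Field F1] [Field F2] [Field K]
    [Fintype F1] [Fintype F2] [Fintype K]
    [DecidableEq F1] [DecidableEq F2] [DecidableEq K]
    [Algebra F1 K] [Algebra F2 K]
    (hcard1 : Fintype.card F1 = p ^ s1) (hcard2 : Fintype.card F2 = p ^ s2)
    (hcard : Fintype.card K = p ^ s) :
    let D : Finset (K × K) := Finset.univ.filter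
      (fun xy : K × K => Algebra.trace F1 K (xy.1 ^ 2 + xy.2 ^ 2) = 0)
    let wt : K → K → F2 → ℕ := fun a b c =>
      (D.filter (fun xy => Algebra.trace F2 K (a * xy.1 + b * xy.2) + c ≠ 0)).card
    (∀ c : F2, c ≠ 0 → wt 0 0 c = D.card) ∧
    ((D.card : ℤ) * p ^ s1
        = p ^ (2 * s) + (p ^ s1 - 1) * ((-1) ^ (((p - 1) / 2) * s) * p ^ s)) ∧
    (∀ a b : K, ¬(a = 0 ∧ b = 0) → Algebra.trace F1 K (a ^ 2 + b ^ 2) = 0 →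
      wt a b 0 = p ^ (2 * s - s1 - s2) * (p ^ s2 - 1)) :=
  stmt9_general p s s1 s2 hp hodd hs hdvd1 hdvd2 F1 F2 K hcard1 hcard2 hcard
end

section
/- Let p be an odd prime and s1 | s2 positive integers. If s2/s1 is odd, then the quadratic character η'' of F_{p^{s2}} restricted to F_{p^{s1}}^* coincides with the quadratic character η' of F_{p^{s1}}; if s2/s1 is even, then η''(b) = 1 for every b ∈ F_{p^{s1}}^*. -/
/-!
Euler's criterion computes the quadratic character of `F_q` as `a ↦ a ^ ((q - 1) / 2)`. For
`a ∈ F_q` and `q` odd, `(q ^ n - 1) / 2 = (q - 1) / 2 * (1 + q + ⋯ + q ^ (n - 1))` and `a ^ q = a`,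
so `a ^ ((q ^ n - 1) / 2) = (a ^ ((q - 1) / 2)) ^ n`: the quadratic character of `F_{q^n}`
restricts to the `n`-th power of that of `F_q`, which is itself for odd `n` and trivial for even `n`.
-/

/-- The quadratic character of a finite field (values in ℤ), extended by `η(0) = 0`. -/
noncomputable def quadCharZ (F : Type) [Field F] [Fintype F] [DecidableEq F] (x : F) : ℤ :=
  if x = 0 then 0 else if IsSquare x then 1 else -1

theorem quadCharZ_eq_quadraticChar (F : Type) [Field F] [Fintype F] [DecidableEq F] (x : F) :
    quadCharZ F x = quadraticChar F x := by
  simp only [quadCharZ, quadraticChar_apply, quadraticCharFun]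

namespace FiniteField

variable {K : Type*} [Field K] [Fintype K]

theorem pow_card_pow_div_two (hK : ringChar K ≠ 2) (n : ℕ) (a : K) :
    a ^ (Fintype.card K ^ n / 2) = (a ^ (Fintype.card K / 2)) ^ n := by
  induction n with
  | zero => simp
  | succ n ih =>
    obtain ⟨r, hr⟩ : Odd (Fintype.card K ^ n) :=
      (Nat.odd_iff.mpr (odd_card_of_char_ne_two hK)).pow
    have hexp : Fintype.card K ^ (n + 1) / 2 = Fintype.card K / 2 + r * Fintype.card K := by
      rw [pow_succ, hr, add_mul, one_mul, mul_assoc, add_comm, Nat.add_mul_div_left _ _ two_pos]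
    have hr2 : Fintype.card K ^ n / 2 = r := by omega
    rw [hexp, pow_add, mul_comm r, pow_mul, pow_card, ← hr2, ih, pow_succ']

theorem quadraticChar_algebraMap {L : Type*} [Field L] [Fintype L] [DecidableEq K] [DecidableEq L]
    [Algebra K L] (hK : ringChar K ≠ 2) {n : ℕ} (hn : Fintype.card L = Fintype.card K ^ n)
    (a : K) : quadraticChar L (algebraMap K L a) = (quadraticChar K ^ n) a := by
  have hL : ringChar L ≠ 2 := Algebra.ringChar_eq K L ▸ hK
  have hn0 : n ≠ 0 := by
    rintro rfl
    exact (Fintype.one_lt_card (α := L)).ne' (by rwa [pow_zero] at hn)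
  have hpow : (quadraticChar K ^ n).IsQuadratic := by
    rw [MulChar.isQuadratic_iff_sq_eq_one, ← pow_mul, mul_comm, pow_mul,
      (quadraticChar_isQuadratic K).sq_eq_one, one_pow]
  refine (quadraticChar_isQuadratic L).eq_of_eq_coe hpow hL ?_
  rw [quadraticChar_eq_pow_of_char_ne_two' hL, MulChar.pow_apply' _ hn0, Int.cast_pow,
    ← map_intCast (algebraMap K L), quadraticChar_eq_pow_of_char_ne_two' hK, hn, ← map_pow,
    pow_card_pow_div_two hK, map_pow]

end FiniteField

theorem stmt17_general (p s1 s2 : ℕ) (hodd : Odd p)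
    (hdvd : s1 ∣ s2)
    (F1 F2 : Type) [Field F1] [Field F2] [Fintype F1] [Fintype F2]
    [DecidableEq F1] [DecidableEq F2] [Algebra F1 F2]
    (hcard1 : Fintype.card F1 = p ^ s1) (hcard2 : Fintype.card F2 = p ^ s2) :
    (Odd (s2 / s1) → ∀ b : F1, b ≠ 0 →
      quadCharZ F2 (algebraMap F1 F2 b) = quadCharZ F1 b) ∧
    (Even (s2 / s1) → ∀ b : F1, b ≠ 0 →
      quadCharZ F2 (algebraMap F1 F2 b) = 1) := by
  have hF1 : ringChar F1 ≠ 2 := fun h => by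
    have h2 := FiniteField.even_card_iff_char_two.mp h
    rw [hcard1, ← Nat.even_iff] at h2
    exact Nat.not_even_iff_odd.mpr hodd.pow h2
  have hcard : Fintype.card F2 = Fintype.card F1 ^ (s2 / s1) := by
    rw [hcard2, hcard1, ← pow_mul, Nat.mul_div_cancel' hdvd]
  simp only [quadCharZ_eq_quadraticChar, FiniteField.quadraticChar_algebraMap hF1 hcard]
  refine ⟨fun hm b _ => ?_, fun hm b hb => ?_⟩
  · rw [(quadraticChar_isQuadratic F1).pow_odd hm]
  · rw [(quadraticChar_isQuadratic F1).pow_even hm, MulChar.one_apply hb.isUnit]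

/-- for `F_{p^{s1}} ⊆ F_{p^{s2}}` of odd characteristic, the quadratic
character `η''` of `F_{p^{s2}}` restricted to `F_{p^{s1}}^*` equals `η'` when `s2/s1`
is odd, and is identically `1` on `F_{p^{s1}}^*` when `s2/s1` is even. -/
theorem stmt17 (p s1 s2 : ℕ) (hp : p.Prime) (hodd : Odd p) (hs1 : 0 < s1)
    (hdvd : s1 ∣ s2)
    (F1 F2 : Type) [Field F1] [Field F2] [Fintype F1] [Fintype F2]
    [DecidableEq F1] [DecidableEq F2] [Algebra F1 F2]
    (hcard1 : Fintype.card F1 = p ^ s1) (hcard2 : Fintype.card F2 = p ^ s2) :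
    (Odd (s2 / s1) → ∀ b : F1, b ≠ 0 →
      quadCharZ F2 (algebraMap F1 F2 b) = quadCharZ F1 b) ∧
    (Even (s2 / s1) → ∀ b : F1, b ≠ 0 →
      quadCharZ F2 (algebraMap F1 F2 b) = 1) :=
  stmt17_general p s1 s2 hodd hdvd F1 F2 hcard1 hcard2
end

section
/- Let C be a self-orthogonal [n,k] linear code over F_q with generator matrix G (an k×n matrix of rank k whose rows span C and satisfy G·Gᵀ = 0). Then the k×(n+k) matrix [I_k : G] generates an [n+k, k] linear code C' over F_q that is an LCD code, i.e., C' ∩ C'^⊥ = {0}. -/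
/-!
Writing `M = [I_k : G]`, the Gram matrix of the rows of `M` is `M Mᵀ = I + G Gᵀ = I`.
Whenever the Gram matrix of a family of vectors is invertible, the family is linearly
independent, and a vector `c ᵥ* M` of its span that is orthogonal to every row satisfies
`c ᵥ* (M Mᵀ) = 0`, hence `c = 0`.
-/

open Matrix

namespace Matrix

variable {ι κ R : Type*} [CommRing R] [Fintype ι] [DecidableEq ι] [Fintype κ]

lemma eq_zero_of_mulVec_vecMul_eq_zero {M : Matrix ι κ R} (hM : IsUnit (M * Mᵀ)) {c : ι → R}
    (h : M *ᵥ (c ᵥ* M) = 0) : c = 0 := by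
  apply vecMul_injective_of_isUnit hM
  change c ᵥ* (M * Mᵀ) = 0 ᵥ* (M * Mᵀ)
  rw [← vecMul_vecMul, vecMul_transpose, h, zero_vecMul]

lemma linearIndependent_row_of_isUnit_mul_transpose {M : Matrix ι κ R}
    (hM : IsUnit (M * Mᵀ)) : LinearIndependent R M.row := by
  rw [Fintype.linearIndependent_iff]
  intro c hc
  have hcM : c ᵥ* M = 0 := by rw [vecMul_eq_sum]; exact hc
  simp [eq_zero_of_mulVec_vecMul_eq_zero hM (by rw [hcM, mulVec_zero])]

lemma eq_zero_of_mem_span_row_of_forall_dotProduct_eq_zero {M : Matrix ι κ R}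
    (hM : IsUnit (M * Mᵀ)) {v : κ → R} (hv : v ∈ Submodule.span R (Set.range M.row))
    (horth : ∀ i, M i ⬝ᵥ v = 0) : v = 0 := by
  obtain ⟨c, rfl⟩ := (Submodule.mem_span_range_iff_exists_fun R).mp hv
  have hcM : ∑ i, c i • M.row i = c ᵥ* M := (vecMul_eq_sum c M).symm
  rw [hcM] at horth ⊢
  rw [eq_zero_of_mulVec_vecMul_eq_zero hM (funext horth), zero_vecMul]

lemma fromCols_one_mul_transpose {n : Type*} [Fintype n] (G : Matrix ι n R) :
    fromCols (1 : Matrix ι ι R) G * (fromCols (1 : Matrix ι ι R) G)ᵀ = 1 + G * Gᵀ := by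
  rw [transpose_fromCols, fromCols_mul_fromRows, transpose_one, one_mul]

end Matrix

theorem stmt18_general (n k : ℕ) (F : Type) [Field F]
    (G : Matrix (Fin k) (Fin n) F)
    (hso : G * G.transpose = 0) :
    let row : Fin k → (Fin k ⊕ Fin n → F) := fun i =>
      Sum.elim (fun j => if i = j then (1 : F) else 0) (G i)
    let C' : Submodule F (Fin k ⊕ Fin n → F) := Submodule.span F (Set.range row)
    -- `C'` has dimension `k` (length `n + k`)
    LinearIndependent F row ∧
    -- `C'` is LCD: its intersection with its dual is trivial
    (∀ v ∈ C', (∀ u ∈ C', ∑ j, u j * v j = 0) → v = 0) := by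
  intro row C'
  set M := fromCols (1 : Matrix (Fin k) (Fin k) F) G
  have hrow : row = M.row := by
    ext i (j | j) <;> simp [row, M, one_apply]
  have hgram : IsUnit (M * Mᵀ) := by
    rw [fromCols_one_mul_transpose, hso, add_zero]
    exact isUnit_one
  simp only [C', hrow]
  refine ⟨linearIndependent_row_of_isUnit_mul_transpose hgram, fun v hv horth => ?_⟩
  exact eq_zero_of_mem_span_row_of_forall_dotProduct_eq_zero hgram hv
    fun i => horth _ (Submodule.subset_span ⟨i, rfl⟩)

/-- if `C` is a self-orthogonal `[n,k]` code over `F_q` with generator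
matrix `G` (rows linearly independent, `G·Gᵀ = 0`), then the matrix `[I_k : G]`
generates an `[n+k, k]` code `C'` that is LCD, i.e. `C' ∩ C'^⊥ = {0}`. -/
theorem stmt18 (n k : ℕ) (F : Type) [Field F] [Fintype F] [DecidableEq F]
    (G : Matrix (Fin k) (Fin n) F)
    (hso : G * G.transpose = 0)
    (hrank : LinearIndependent F (fun i : Fin k => G i)) :
    let row : Fin k → (Fin k ⊕ Fin n → F) := fun i =>
      Sum.elim (fun j => if i = j then (1 : F) else 0) (G i)
    let C' : Submodule F (Fin k ⊕ Fin n → F) := Submodule.span F (Set.range row)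
    -- `C'` has dimension `k` (length `n + k`)
    LinearIndependent F row ∧
    -- `C'` is LCD: its intersection with its dual is trivial
    (∀ v ∈ C', (∀ u ∈ C', ∑ j, u j * v j = 0) → v = 0) :=
  stmt18_general n k F G hso
end
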